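/- arXiv:1006.4888 — 11 statements merged into one kernel-verified Lean document; each statement's English description precedes it below -/
import Mathlib

section
/- Let D, M, J be positive integers. For m ∈ {1,…,M} let U_m and V_m be D×D complex unitary matrices, and for j ∈ {1,…,J} let ψ_j and φ_j be D×D complex matrices with each ψ_j invertible. Assume that for every m and every j there exists a complex number c with |c| = 1 such that U_m · ψ_j · V_mᵀ = c · φ_j. Then for all m, n ∈ {1,…,M} and all j, k ∈ {1,…,J} there exists a complex number z with |z| = 1 such that (U_m† U_n) · (ψ_j ψ_k†) = z · (ψ_j ψ_k†) · (U_m† U_n). -/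
/-!
Write `A = ψ_j ψ_kᴴ`. Since `V_mᵀ` is unitary, multiplying `U_m ψ_j V_mᵀ = a φ_j` by the adjoint of
`U_m ψ_k V_mᵀ = b φ_k` cancels `V_m` and gives `U_m A U_mᴴ = (a b̄) φ_j φ_kᴴ`. The right-hand side
depends on `m` only through the unimodular scalar `a b̄`, so `U_n A U_nᴴ = z · U_m A U_mᴴ` for a
phase `z`, which is the claimed twisted commutation of `U_mᴴ U_n` with `A`.
-/

open Matrix

variable {n : Type*} [Fintype n] [DecidableEq n]

lemma transpose_mul_conjTranspose_transpose_eq_one {R : Type*} [CommSemiring R] [StarRing R]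
    {V : Matrix n n R} (hV : Vᴴ * V = 1) : Vᵀ * Vᵀᴴ = 1 := by
  rw [conjTranspose_transpose_eq_transpose_conjTranspose, ← transpose_mul, hV, transpose_one]

lemma conj_mul_conjTranspose_eq_smul_of_mul_mul_eq_smul {R : Type*} [CommSemiring R] [StarRing R]
    {U W ψ χ φ φ' : Matrix n n R} {e f : R} (hW : W * Wᴴ = 1)
    (hψ : U * ψ * W = e • φ) (hχ : U * χ * W = f • φ') :
    U * (ψ * χᴴ) * Uᴴ = (e * star f) • (φ * φ'ᴴ) := calc
  U * (ψ * χᴴ) * Uᴴ = (U * ψ * W) * (U * χ * W)ᴴ := by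
    simp only [conjTranspose_mul, Matrix.mul_assoc, ← Matrix.mul_assoc W, hW, Matrix.one_mul]
  _ = (e * star f) • (φ * φ'ᴴ) := by
    rw [hψ, hχ, conjTranspose_smul, smul_mul_assoc, mul_smul_comm, smul_smul]

lemma conjTranspose_mul_mul_eq_smul_of_conj_eq_smul {K : Type*} [Field K] [StarRing K]
    {U U' A B : Matrix n n K} {s t : K} (hU : Uᴴ * U = 1) (hU' : U'ᴴ * U' = 1) (hs : s ≠ 0)
    (h : U * A * Uᴴ = s • B) (h' : U' * A * U'ᴴ = t • B) :
    Uᴴ * U' * A = (t / s) • (A * (Uᴴ * U')) := by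
  have hB : B = s⁻¹ • (U * A * Uᴴ) := by rw [h, smul_smul, inv_mul_cancel₀ hs, one_smul]
  calc Uᴴ * U' * A = Uᴴ * (U' * A * U'ᴴ) * U' := by
        simp only [Matrix.mul_assoc, hU', Matrix.mul_one]
    _ = (t / s) • (Uᴴ * (U * A * Uᴴ) * U') := by
        rw [h', hB, smul_smul, ← div_eq_mul_inv, mul_smul_comm, smul_mul_assoc]
    _ = (t / s) • (A * (Uᴴ * U')) := by
        simp only [← Matrix.mul_assoc, hU, Matrix.one_mul]

theorem random_unitary_commute_up_to_phase_general (D M J : ℕ)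
    (U V : Fin M → Matrix (Fin D) (Fin D) ℂ)
    (hU : ∀ m, (U m)ᴴ * U m = 1) (hV : ∀ m, (V m)ᴴ * V m = 1)
    (ψ φ : Fin J → Matrix (Fin D) (Fin D) ℂ)
    (hmap : ∀ m j, ∃ c : ℂ, ‖c‖ = 1 ∧ U m * ψ j * (V m)ᵀ = c • φ j) :
    ∀ m n : Fin M, ∀ j k : Fin J, ∃ z : ℂ, ‖z‖ = 1 ∧
      ((U m)ᴴ * U n) * (ψ j * (ψ k)ᴴ) = z • ((ψ j * (ψ k)ᴴ) * ((U m)ᴴ * U n)) := by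
  intro m n j k
  obtain ⟨a, ha, hmj⟩ := hmap m j
  obtain ⟨b, hb, hmk⟩ := hmap m k
  obtain ⟨c, hc, hnj⟩ := hmap n j
  obtain ⟨d, hd, hnk⟩ := hmap n k
  have hVt := fun p => transpose_mul_conjTranspose_transpose_eq_one (hV p)
  have hab : a * star b ≠ 0 := by
    rw [← norm_ne_zero_iff, norm_mul, norm_star, ha, hb]
    norm_num
  refine ⟨c * star d / (a * star b), by simp [ha, hb, hc, hd], ?_⟩
  exact conjTranspose_mul_mul_eq_smul_of_conj_eq_smul (hU m) (hU n) hab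
    (conj_mul_conjTranspose_eq_smul_of_mul_mul_eq_smul (hVt m) hmj hmk)
    (conj_mul_conjTranspose_eq_smul_of_mul_mul_eq_smul (hVt n) hnj hnk)

/-- If unitary products `U_m ⊗ V_m` map each full-Schmidt-rank state `ψ_j` to `φ_j`
up to a phase, then `U_m† U_n` commutes with `ψ_j ψ_k†` up to a phase. -/
theorem random_unitary_commute_up_to_phase (D M J : ℕ) (hD : 0 < D) (hM : 0 < M) (hJ : 0 < J)
    (U V : Fin M → Matrix (Fin D) (Fin D) ℂ)
    (hU : ∀ m, (U m)ᴴ * U m = 1) (hV : ∀ m, (V m)ᴴ * V m = 1)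
    (ψ φ : Fin J → Matrix (Fin D) (Fin D) ℂ)
    (hψ : ∀ j, IsUnit (ψ j))
    (hmap : ∀ m j, ∃ c : ℂ, ‖c‖ = 1 ∧ U m * ψ j * (V m)ᵀ = c • φ j) :
    ∀ m n : Fin M, ∀ j k : Fin J, ∃ z : ℂ, ‖z‖ = 1 ∧
      ((U m)ᴴ * U n) * (ψ j * (ψ k)ᴴ) = z • ((ψ j * (ψ k)ᴴ) * ((U m)ᴴ * U n)) :=
  random_unitary_commute_up_to_phase_general D M J U V hU hV ψ φ hmap
end

section
/- Let D and N be positive integers, let λ : {0,…,D−1} → ℝ be nondecreasing with λ_0 ≥ 0, and let ψ be the D×D diagonal complex matrix with diagonal entries √λ_0, √λ_1, …, √λ_{D−1}. Let A_k, B_k (1 ≤ k ≤ N) be arbitrary D×D complex matrices, and let r be a real number such that r·I − ∑_k (A_k†A_k) ⊗ (B_k†B_k) is positive semidefinite. Then for every integer n with 0 ≤ n ≤ D, ∑_{k=1}^N χ_n((A_k ψ B_kᵀ)(A_k ψ B_kᵀ)†) ≤ r · ∑_{j=0}^{n−1} λ_j. -/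
/-!
By Ky Fan's principle, `χ_n(M Mᴴ) ≤ ∑ᵢ ‖Mᴴ uᵢ‖²` for every orthonormal family `u₁, …, uₙ`.
For `M = A ψ Bᵀ` choose the `uᵢ` orthogonal to the `D - n` columns `A eₐ` with `a ≥ n`: then
`Mᴴ uᵢ = Xᴴ uᵢ` for `X = A ψₙ Bᵀ`, where `ψₙ` keeps only the `n` smallest Schmidt coefficients,
and Bessel's inequality bounds the sum by `‖X‖²_F`. Writing `v` for the vectorisation of `ψₙ`,
`‖A ψₙ Bᵀ‖²_F = ⟨v, (AᴴA ⊗ BᴴB) v⟩`, so summing over `k` and using `∑ₖ AₖᴴAₖ ⊗ BₖᴴBₖ ≤ r` gives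
at most `r ‖v‖² = r ∑_{j<n} λⱼ`.
-/

open Matrix Kronecker ComplexOrder

/-- `chi hM n` is the sum of the `n` smallest eigenvalues of the Hermitian matrix `M`,
i.e. the minimum over all `n`-element subsets `s` of the index set of the sum of the
eigenvalues of `M` over `s`. -/
noncomputable def chi {D : ℕ} {M : Matrix (Fin D) (Fin D) ℂ} (hM : M.IsHermitian)
    (n : ℕ) : ℝ :=
  sInf {x : ℝ | ∃ s : Finset (Fin D), s.card = n ∧ x = ∑ i ∈ s, hM.eigenvalues i}

open Finset

theorem RCLike.re_star_dotProduct_self {𝕜 ι : Type*} [RCLike 𝕜] [Fintype ι] (w : ι → 𝕜) :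
    RCLike.re (star w ⬝ᵥ w) = ∑ i, ‖w i‖ ^ 2 := by
  rw [dotProduct_comm, ← EuclideanSpace.inner_toLp_toLp, inner_self_eq_norm_sq,
    EuclideanSpace.norm_sq_eq]

theorem Matrix.re_star_dotProduct_mul_conjTranspose_mulVec {𝕜 m n : Type*} [RCLike 𝕜]
    [Fintype m] [Fintype n] (M : Matrix m n 𝕜) (x : m → 𝕜) :
    RCLike.re (star x ⬝ᵥ (M * Mᴴ) *ᵥ x) = ∑ k, ‖(Mᴴ *ᵥ x) k‖ ^ 2 := by
  rw [← mulVec_mulVec, dotProduct_mulVec, ← conjTranspose_conjTranspose M, ← star_mulVec,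
    conjTranspose_conjTranspose, RCLike.re_star_dotProduct_self]

theorem Matrix.IsHermitian.re_star_dotProduct_mulVec {𝕜 ι : Type*} [RCLike 𝕜] [Fintype ι]
    [DecidableEq ι] {M : Matrix ι ι 𝕜} (hM : M.IsHermitian) (x : EuclideanSpace 𝕜 ι) :
    RCLike.re (star ⇑x ⬝ᵥ M *ᵥ ⇑x)
      = ∑ j, hM.eigenvalues j * ‖inner 𝕜 (hM.eigenvectorBasis j) x‖ ^ 2 := by
  set b := hM.eigenvectorBasis
  set T := toEuclideanLin M
  have hT : T.IsSymmetric := isSymmetric_toEuclideanLin_iff.mpr hM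
  have hTb : ∀ j, T (b j) = (hM.eigenvalues j : 𝕜) • b j := by
    intro j
    ext i
    simp [T, b, hM.mulVec_eigenvectorBasis j]
  have hb : ∀ j, inner 𝕜 (b j) (T x) = hM.eigenvalues j * inner 𝕜 (b j) x := by
    intro j
    rw [← hT, hTb, inner_smul_left, RCLike.conj_ofReal]
  calc RCLike.re (star ⇑x ⬝ᵥ M *ᵥ ⇑x) = RCLike.re (inner 𝕜 x (T x)) := by
        rw [dotProduct_comm]; rfl
    _ = ∑ j, hM.eigenvalues j * ‖inner 𝕜 (b j) x‖ ^ 2 := by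
        rw [← b.sum_inner_mul_inner, map_sum]
        refine sum_congr rfl fun j _ => ?_
        rw [hb, ← inner_conj_symm, mul_left_comm, RCLike.conj_mul, ← RCLike.ofReal_pow,
          ← RCLike.ofReal_mul, RCLike.ofReal_re]

theorem Matrix.sum_norm_sq_conjTranspose_mulVec_le {𝕜 ι m n : Type*} [RCLike 𝕜] [Fintype ι]
    [Fintype m] [Fintype n] (X : Matrix m n 𝕜) {u : ι → EuclideanSpace 𝕜 m}
    (hu : Orthonormal 𝕜 u) :
    ∑ i, ∑ k, ‖(Xᴴ *ᵥ ⇑(u i)) k‖ ^ 2 ≤ ∑ j, ∑ k, ‖X j k‖ ^ 2 := by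
  have hcol : ∀ i k, (Xᴴ *ᵥ ⇑(u i)) k = inner 𝕜 (WithLp.toLp 2 fun j => X j k) (u i) := by
    intro i k
    simp [EuclideanSpace.inner_eq_star_dotProduct, mulVec, dotProduct, mul_comm]
  rw [sum_comm (γ := ι), sum_comm (γ := m)]
  refine sum_le_sum fun k _ => ?_
  calc ∑ i, ‖(Xᴴ *ᵥ ⇑(u i)) k‖ ^ 2
      = ∑ i, ‖inner 𝕜 (u i) (WithLp.toLp 2 fun j => X j k)‖ ^ 2 := by
        simp only [hcol, norm_inner_symm]
    _ ≤ ‖WithLp.toLp 2 fun j => X j k‖ ^ 2 := hu.sum_inner_products_le _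
    _ = ∑ j, ‖X j k‖ ^ 2 := EuclideanSpace.norm_sq_eq _

theorem exists_orthonormal_forall_inner_eq_zero {𝕜 E κ : Type*} [RCLike 𝕜]
    [NormedAddCommGroup E] [InnerProductSpace 𝕜 E] [FiniteDimensional 𝕜 E] [Fintype κ]
    (g : κ → E) {n : ℕ} (hn : Fintype.card κ + n ≤ Module.finrank 𝕜 E) :
    ∃ u : Fin n → E, Orthonormal 𝕜 u ∧ ∀ a i, inner 𝕜 (g a) (u i) = 0 := by
  set W := Submodule.span 𝕜 (Set.range g)
  have hW : n ≤ Module.finrank 𝕜 Wᗮ := by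
    have := W.finrank_add_finrank_orthogonal
    have : Module.finrank 𝕜 W ≤ Fintype.card κ := finrank_range_le_card g
    omega
  set b := stdOrthonormalBasis 𝕜 Wᗮ
  refine ⟨fun i => b (Fin.castLE hW i), ?_, fun a i => ?_⟩
  · exact (b.orthonormal.comp_linearIsometry Wᗮ.subtypeₗᵢ).comp _ (Fin.castLE_injective hW)
  · exact (Submodule.mem_orthogonal _ _).mp (b _).2 _ (Submodule.subset_span ⟨a, rfl⟩)

theorem Matrix.diagonal_mulVec_congr {α n : Type*} [CommSemiring α] [Fintype n] [DecidableEq n]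
    {d d' w : n → α} (h : ∀ a, w a ≠ 0 → d a = d' a) :
    diagonal d *ᵥ w = diagonal d' *ᵥ w := by
  ext a
  rw [mulVec_diagonal, mulVec_diagonal]
  by_cases ha : w a = 0
  · simp [ha]
  · rw [h a ha]

theorem Matrix.re_star_vec_transpose_dotProduct_kronecker_mulVec {𝕜 l m n p : Type*}
    [RCLike 𝕜] [Fintype l] [Fintype m] [Fintype n] [Fintype p]
    (A : Matrix l m 𝕜) (B : Matrix n p 𝕜) (X : Matrix m p 𝕜) :
    RCLike.re (star (vec Xᵀ) ⬝ᵥ ((Aᴴ * A) ⊗ₖ (Bᴴ * B)) *ᵥ vec Xᵀ)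
      = ∑ j, ∑ k, ‖(A * X * Bᵀ : Matrix l n 𝕜) j k‖ ^ 2 := by
  rw [mul_kronecker_mul, ← conjTranspose_kronecker, ← mulVec_mulVec, dotProduct_mulVec,
    ← star_mulVec, kronecker_mulVec_vec, RCLike.re_star_dotProduct_self, Fintype.sum_prod_type,
    show B * Xᵀ * Aᵀ = (A * X * Bᵀ)ᵀ by simp [transpose_mul, Matrix.mul_assoc]]
  rfl

theorem Matrix.re_star_vec_diagonal_dotProduct_self {𝕜 n : Type*} [RCLike 𝕜] [Fintype n]
    [DecidableEq n] (d : n → 𝕜) :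
    RCLike.re (star (vec (diagonal d)) ⬝ᵥ vec (diagonal d)) = ∑ a, ‖d a‖ ^ 2 := by
  rw [RCLike.re_star_dotProduct_self, Fintype.sum_prod_type]
  refine sum_congr rfl fun a _ => ?_
  rw [sum_eq_single a (fun b _ hb => by simp [diagonal_apply_ne _ hb]) (by simp)]
  simp

theorem Matrix.re_star_dotProduct_mulVec_le_of_posSemidef {n : Type*} [Fintype n] [DecidableEq n]
    {R : Matrix n n ℂ} {r : ℝ} (hr : ((r : ℂ) • 1 - R).PosSemidef) (v : n → ℂ) :
    (star v ⬝ᵥ R *ᵥ v).re ≤ r * (star v ⬝ᵥ v).re := by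
  have h := (Complex.le_def.mp (hr.dotProduct_mulVec_nonneg v)).1
  rw [sub_mulVec, dotProduct_sub, smul_mulVec, one_mulVec, dotProduct_smul, smul_eq_mul,
    Complex.sub_re, Complex.re_ofReal_mul, Complex.zero_re] at h
  linarith

theorem sum_le_sum_mul_of_separated {ι : Type*} [Fintype ι] {e t : ι → ℝ} {s : Finset ι}
    {μ : ℝ} (hs : ∀ i ∈ s, e i ≤ μ) (hsc : ∀ j ∉ s, μ ≤ e j)
    (ht0 : ∀ j, 0 ≤ t j) (ht1 : ∀ j, t j ≤ 1) (hts : ∑ j, t j = #s) :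
    ∑ i ∈ s, e i ≤ ∑ j, e j * t j := by
  classical
  -- `∑ e t - ∑_s e` is the sum below, since `∑ t = #s`; each term is `≥ 0` by the separation.
  have hterm : ∀ j, 0 ≤ (e j - μ) * (t j - if j ∈ s then 1 else 0) := by
    intro j
    by_cases hj : j ∈ s
    · simp only [hj, if_true]
      exact mul_nonneg_of_nonpos_of_nonpos (by linarith [hs j hj]) (by linarith [ht1 j])
    · simp only [hj, if_false]
      exact mul_nonneg (by linarith [hsc j hj]) (by linarith [ht0 j])
  have hexpand : ∑ j, (e j - μ) * (t j - if j ∈ s then 1 else 0)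
      = ∑ j, e j * t j - ∑ i ∈ s, e i - μ * (∑ j, t j - #s) := by
    simp only [sub_mul, mul_sub, sum_sub_distrib, mul_ite, mul_one, mul_zero, sum_ite_mem,
      univ_inter, ← mul_sum, sum_const, nsmul_eq_mul]
    ring
  have := sum_nonneg fun j (_ : j ∈ univ) => hterm j
  rw [hexpand, hts, sub_self, mul_zero, sub_zero] at this
  linarith

theorem exists_threshold_of_sum_le_sum {ι : Type*} [Fintype ι] (e : ι → ℝ) {s : Finset ι}
    (hmin : ∀ s' : Finset ι, #s' = #s → ∑ i ∈ s, e i ≤ ∑ i ∈ s', e i) :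
    ∃ μ, (∀ i ∈ s, e i ≤ μ) ∧ ∀ j ∉ s, μ ≤ e j := by
  classical
  have hswap : ∀ i ∈ s, ∀ j ∉ s, e i ≤ e j := by
    intro i hi j hj
    have h := hmin (insert j (s.erase i)) (by
      rw [card_insert_of_notMem (fun h => hj (mem_of_mem_erase h)), card_erase_of_mem hi]
      have := card_pos.mpr ⟨i, hi⟩
      omega)
    rw [sum_insert (fun h => hj (mem_of_mem_erase h)), ← add_sum_erase s e hi] at h
    linarith
  rcases s.eq_empty_or_nonempty with rfl | hne
  · obtain ⟨μ, hμ⟩ := (Set.finite_range e).bddBelow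
    exact ⟨μ, by simp, fun j _ => hμ ⟨j, rfl⟩⟩
  · exact ⟨s.sup' hne e, fun i hi => le_sup' e hi,
      fun j hj => sup'_le hne e fun i hi => hswap i hi j hj⟩

theorem exists_card_eq_sum_le_sum_mul {ι : Type*} [Fintype ι] (e t : ι → ℝ) {n : ℕ}
    (ht0 : ∀ j, 0 ≤ t j) (ht1 : ∀ j, t j ≤ 1) (hts : ∑ j, t j = n) :
    ∃ s : Finset ι, #s = n ∧ ∑ i ∈ s, e i ≤ ∑ j, e j * t j := by
  classical
  have hn : n ≤ Fintype.card ι := by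
    have : (n : ℝ) ≤ Fintype.card ι := by
      rw [← hts, ← card_univ, ← nsmul_one, ← sum_const]
      exact sum_le_sum fun j _ => ht1 j
    exact_mod_cast this
  obtain ⟨s, hs, hmin⟩ := (powersetCard n (univ : Finset ι)).exists_min_image
    (fun s => ∑ i ∈ s, e i) (powersetCard_nonempty.mpr (by simpa using hn))
  rw [mem_powersetCard_univ] at hs
  obtain ⟨μ, hμs, hμsc⟩ := exists_threshold_of_sum_le_sum e fun s' hs' =>
    hmin s' (mem_powersetCard_univ.mpr (hs' ▸ hs))
  exact ⟨s, hs, sum_le_sum_mul_of_separated hμs hμsc ht0 ht1 (by rw [hts, hs])⟩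

theorem chi_le_sum_eigenvalues {D : ℕ} {M : Matrix (Fin D) (Fin D) ℂ} (hM : M.IsHermitian)
    (s : Finset (Fin D)) : chi hM #s ≤ ∑ i ∈ s, hM.eigenvalues i :=
  csInf_le ((Set.finite_range fun s : Finset (Fin D) => ∑ i ∈ s, hM.eigenvalues i).bddBelow.mono
    (by rintro x ⟨s, -, rfl⟩; exact ⟨s, rfl⟩)) ⟨s, rfl, rfl⟩

theorem chi_le_sum_re_star_dotProduct_mulVec {D n : ℕ} {M : Matrix (Fin D) (Fin D) ℂ}
    (hM : M.IsHermitian) {u : Fin n → EuclideanSpace ℂ (Fin D)} (hu : Orthonormal ℂ u) :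
    chi hM n ≤ ∑ i, (star ⇑(u i) ⬝ᵥ M *ᵥ ⇑(u i)).re := by
  set b := hM.eigenvectorBasis
  set t : Fin D → ℝ := fun j => ∑ i, ‖inner ℂ (b j) (u i)‖ ^ 2
  have ht0 : ∀ j, 0 ≤ t j := fun j => sum_nonneg fun i _ => by positivity
  have ht1 : ∀ j, t j ≤ 1 := fun j => by
    simpa [t, ← norm_inner_symm (b j), b.orthonormal.1 j] using
      hu.sum_inner_products_le (s := univ) (b j)
  have hts : ∑ j, t j = n := by
    rw [sum_comm]
    simp [b.sum_sq_norm_inner_right, hu.1]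
  obtain ⟨s, rfl, hs⟩ := exists_card_eq_sum_le_sum_mul hM.eigenvalues t ht0 ht1 hts
  calc chi hM #s ≤ ∑ i ∈ s, hM.eigenvalues i := chi_le_sum_eigenvalues hM s
    _ ≤ ∑ j, hM.eigenvalues j * t j := hs
    _ = ∑ i, (star ⇑(u i) ⬝ᵥ M *ᵥ ⇑(u i)).re := by
      simp only [t, mul_sum, ← RCLike.re_to_complex, hM.re_star_dotProduct_mulVec]
      exact sum_comm

theorem chi_mul_diagonal_mul_le {D : ℕ} (A C : Matrix (Fin D) (Fin D) ℂ) (d : Fin D → ℂ)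
    {n : ℕ} (hn : n ≤ D) :
    chi (isHermitian_mul_conjTranspose_self (A * diagonal d * C)) n ≤
      ∑ j, ∑ k,
        ‖(A * diagonal (fun a : Fin D => if (a : ℕ) < n then d a else 0) * C) j k‖ ^ 2 := by
  set X := A * diagonal (fun a : Fin D => if (a : ℕ) < n then d a else 0) * C
  have hcard : Fintype.card {a : Fin D // ¬ (a : ℕ) < n} + n
      ≤ Module.finrank ℂ (EuclideanSpace ℂ (Fin D)) := by
    rw [Fintype.card_subtype_compl, Fintype.card_subtype, Fin.card_filter_val_lt,
      finrank_euclideanSpace_fin, Fintype.card_fin]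
    omega
  -- `u` is orthogonal to the columns of `A` where the truncated diagonal differs from `d`,
  -- so the discarded entries of `d` never act on `u`.
  obtain ⟨u, hu, horth⟩ := exists_orthonormal_forall_inner_eq_zero
    (fun a : {a : Fin D // ¬ (a : ℕ) < n} => WithLp.toLp 2 fun j => A j a) hcard
  have hcols : ∀ i, (A * diagonal d * C)ᴴ *ᵥ ⇑(u i) = Xᴴ *ᵥ ⇑(u i) := by
    intro i
    simp only [X, conjTranspose_mul, diagonal_conjTranspose, ← mulVec_mulVec]
    congr 1
    refine diagonal_mulVec_congr fun a ha => ?_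
    by_cases han : (a : ℕ) < n
    · simp [han]
    · refine absurd ?_ ha
      simpa [EuclideanSpace.inner_eq_star_dotProduct, mulVec, dotProduct, mul_comm]
        using horth ⟨a, han⟩ i
  calc _ ≤ ∑ i, (star ⇑(u i) ⬝ᵥ (A * diagonal d * C * (A * diagonal d * C)ᴴ) *ᵥ ⇑(u i)).re :=
        chi_le_sum_re_star_dotProduct_mulVec _ hu
    _ = ∑ i, ∑ k, ‖(Xᴴ *ᵥ ⇑(u i)) k‖ ^ 2 := by
        simp only [← RCLike.re_to_complex, re_star_dotProduct_mul_conjTranspose_mulVec, hcols]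
    _ ≤ _ := sum_norm_sq_conjTranspose_mulVec_le X hu

theorem majorization_chi_bound_general (D N : ℕ) (hD : 0 < D)
    (lam : Fin D → ℝ) (hmono : Monotone lam) (h0 : 0 ≤ lam ⟨0, hD⟩)
    (A B : Fin N → Matrix (Fin D) (Fin D) ℂ)
    (r : ℝ)
    (hr : ((r : ℂ) • (1 : Matrix (Fin D × Fin D) (Fin D × Fin D) ℂ) -
      ∑ k, ((A k)ᴴ * A k) ⊗ₖ ((B k)ᴴ * B k)).PosSemidef)
    (n : ℕ) (hn : n ≤ D) :
    ∑ k, chi (Matrix.isHermitian_mul_conjTranspose_self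
        (A k * Matrix.diagonal (fun j => (Real.sqrt (lam j) : ℂ)) * (B k)ᵀ)) n ≤
      r * ∑ j ∈ Finset.univ.filter (fun j : Fin D => (j : ℕ) < n), lam j := by
  have hlam : ∀ j, 0 ≤ lam j := fun j => h0.trans (hmono (Fin.mk_le_of_le_val (Nat.zero_le _)))
  set d : Fin D → ℂ := fun a => if (a : ℕ) < n then (Real.sqrt (lam a) : ℂ) else 0
  set v := vec (diagonal d)ᵀ
  calc _ ≤ ∑ k, ∑ j, ∑ m, ‖(A k * diagonal d * (B k)ᵀ) j m‖ ^ 2 :=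
        sum_le_sum fun k _ => chi_mul_diagonal_mul_le _ _ _ hn
    _ = ∑ k, (star v ⬝ᵥ (((A k)ᴴ * A k) ⊗ₖ ((B k)ᴴ * B k)) *ᵥ v).re := by
        simp only [v, ← RCLike.re_to_complex, re_star_vec_transpose_dotProduct_kronecker_mulVec]
    _ = (star v ⬝ᵥ (∑ k, ((A k)ᴴ * A k) ⊗ₖ ((B k)ᴴ * B k)) *ᵥ v).re := by
        rw [sum_mulVec, dotProduct_sum, Complex.re_sum]
    _ ≤ r * (star v ⬝ᵥ v).re := re_star_dotProduct_mulVec_le_of_posSemidef hr v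
    _ = r * ∑ j ∈ Finset.univ.filter (fun j : Fin D => (j : ℕ) < n), lam j := by
        simp only [v, diagonal_transpose, ← RCLike.re_to_complex,
          re_star_vec_diagonal_dotProduct_self, sum_filter]
        congr 1
        refine sum_congr rfl fun a _ => ?_
        split_ifs <;> simp [d, *]

/-- Majorization theorem: for any collection of product operators `A_k ⊗ B_k` with
`∑_k A_k†A_k ⊗ B_k†B_k ≤ r·I`, and `ψ` the diagonal matrix of square roots of the
increasingly ordered Schmidt coefficients `λ`, the sum over `k` of the `n` smallest
eigenvalues of `(A_k ψ B_kᵀ)(A_k ψ B_kᵀ)†` is at most `r` times the sum of the `n`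
smallest Schmidt coefficients. -/
theorem majorization_chi_bound (D N : ℕ) (hD : 0 < D) (hN : 0 < N)
    (lam : Fin D → ℝ) (hmono : Monotone lam) (h0 : 0 ≤ lam ⟨0, hD⟩)
    (A B : Fin N → Matrix (Fin D) (Fin D) ℂ)
    (r : ℝ)
    (hr : ((r : ℂ) • (1 : Matrix (Fin D × Fin D) (Fin D × Fin D) ℂ) -
      ∑ k, ((A k)ᴴ * A k) ⊗ₖ ((B k)ᴴ * B k)).PosSemidef)
    (n : ℕ) (hn : n ≤ D) :
    ∑ k, chi (Matrix.isHermitian_mul_conjTranspose_self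
        (A k * Matrix.diagonal (fun j => (Real.sqrt (lam j) : ℂ)) * (B k)ᵀ)) n ≤
      r * ∑ j ∈ Finset.univ.filter (fun j : Fin D => (j : ℕ) < n), lam j :=
  majorization_chi_bound_general D N hD lam hmono h0 A B r hr n hn
end

section
/- Let D, M, N be positive integers. For m ∈ {1,…,M} let A_m and B_m be D²×D² complex matrices (with rows and columns indexed by pairs from Fin D × Fin D) satisfying the closure condition ∑_m (A_m†A_m) ⊗ (B_m†B_m) = I. Let φ and ψ_1,…,ψ_N be invertible D×D complex matrices, and let c_{m,i} be complex numbers with ∑_{m=1}^M |c_{m,i}|² = 1 for every i, such that A_m · (ψ_i ⊗ φ) · B_mᵀ = c_{m,i} · (ψ_i ⊗ ψ_i) for all m and i. Then |det ψ_i| = |det ψ_j| for all i, j (all the states ψ_i have the same G-concurrence), and |c_{m,i}| = |c_{m,j}| for all m, i, j (the probabilities p_{m,i} = |c_{m,i}|² are independent of which state is input). -/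
/-!
Taking determinants of `A_m (ψ_i ⊗ φ) B_mᵀ = c_{m,i} (ψ_i ⊗ ψ_i)` shows that
`|c_{m,i}|^(D²) |det ψ_i|^D = |det A_m| |det B_m| |det φ|^D` does not depend on `i`.
So if `|det ψ_j| ≤ |det ψ_i|`, then `|c_{m,i}| ≤ |c_{m,j}|` for every `m`; as both columns
`(|c_{m,i}|²)_m` and `(|c_{m,j}|²)_m` sum to `1`, they agree, and then so do the determinants.
-/

open Matrix Kronecker

theorem pow_mul_det_eq_of_mul_kronecker_mul_transpose_eq
    {R n : Type*} [CommRing R] [Fintype n] [DecidableEq n]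
    {A B : Matrix (n × n) (n × n) R} {ψ φ : Matrix n n R} {c : R} (hψ : IsUnit ψ)
    (h : A * (ψ ⊗ₖ φ) * Bᵀ = c • (ψ ⊗ₖ ψ)) :
    c ^ (Fintype.card n * Fintype.card n) * ψ.det ^ Fintype.card n =
      A.det * B.det * φ.det ^ Fintype.card n := by
  have hdet := congrArg det h
  rw [det_mul, det_mul, det_transpose, det_kronecker, det_smul, det_kronecker,
    Fintype.card_prod] at hdet
  have hunit : IsUnit (ψ.det ^ Fintype.card n) :=
    ((isUnit_iff_isUnit_det ψ).mp hψ).pow _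
  refine hunit.mul_left_cancel ?_
  linear_combination hdet.symm

theorem le_of_pow_mul_pow_eq_of_le {a b x y : ℝ} {p q : ℕ} (hb : 0 ≤ b)
    (hy : 0 < y) (hp : p ≠ 0) (hyx : y ≤ x) (h : a ^ p * x ^ q = b ^ p * y ^ q) : a ≤ b := by
  by_contra! hba
  have hx : 0 < x := hy.trans_le hyx
  have : b ^ p * y ^ q < a ^ p * x ^ q :=
    calc b ^ p * y ^ q ≤ b ^ p * x ^ q := by gcongr
      _ < a ^ p * x ^ q := by gcongr
  exact this.ne' h

theorem eq_of_le_of_sum_sq_eq {ι : Type*} {s : Finset ι} {f g : ι → ℝ}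
    (hf : ∀ i ∈ s, 0 ≤ f i) (hfg : ∀ i ∈ s, f i ≤ g i)
    (hsum : ∑ i ∈ s, f i ^ 2 = ∑ i ∈ s, g i ^ 2) : ∀ i ∈ s, f i = g i := by
  have hsq := (Finset.sum_eq_sum_iff_of_le fun i hi =>
    pow_le_pow_left₀ (hf i hi) (hfg i hi) 2).mp hsum
  exact fun i hi => (pow_left_inj₀ (hf i hi) ((hf i hi).trans (hfg i hi)) two_ne_zero).mp
    (hsq i hi)

theorem eq_of_pow_mul_pow_eq_of_sum_sq_eq_one {ι κ : Type*} [Fintype ι] {a : ι → κ → ℝ}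
    {x : κ → ℝ} {p q : ℕ} (hp : p ≠ 0) (hq : q ≠ 0) (ha : ∀ m i, 0 ≤ a m i)
    (hx : ∀ i, 0 < x i) (hsum : ∀ i, ∑ m, a m i ^ 2 = 1)
    (h : ∀ m i j, a m i ^ p * x i ^ q = a m j ^ p * x j ^ q) (i j : κ) :
    x i = x j ∧ ∀ m, a m i = a m j := by
  wlog hji : x j ≤ x i generalizing i j
  · obtain ⟨hxji, haji⟩ := this j i (le_of_not_ge hji)
    exact ⟨hxji.symm, fun m => (haji m).symm⟩
  have hcol : ∀ m, a m i = a m j := fun m =>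
    eq_of_le_of_sum_sq_eq (fun m _ => ha m i)
      (fun m _ => le_of_pow_mul_pow_eq_of_le (ha m j) (hx j) hp hji (h m i j))
      ((hsum i).trans (hsum j).symm) m (Finset.mem_univ m)
  obtain ⟨m, hm⟩ : ∃ m, a m i ≠ 0 := by
    by_contra! h0
    simpa [h0] using hsum i
  have hpow : x i ^ q = x j ^ q := by
    have := h m i j
    rw [← hcol m] at this
    exact mul_left_cancel₀ (pow_ne_zero p hm) this
  exact ⟨(pow_left_inj₀ (hx i).le (hx j).le hq).mp hpow, hcol⟩

theorem local_cloning_equal_det_general (D M N : ℕ) (hD : 0 < D)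
    (A B : Fin M → Matrix (Fin D × Fin D) (Fin D × Fin D) ℂ)
    (φ : Matrix (Fin D) (Fin D) ℂ)
    (ψ : Fin N → Matrix (Fin D) (Fin D) ℂ) (hψ : ∀ i, IsUnit (ψ i))
    (c : Fin M → Fin N → ℂ)
    (hc : ∀ i, ∑ m, ‖c m i‖ ^ 2 = 1)
    (hmap : ∀ m i, A m * ((ψ i) ⊗ₖ φ) * (B m)ᵀ = c m i • ((ψ i) ⊗ₖ (ψ i))) :
    (∀ i j, ‖(ψ i).det‖ = ‖(ψ j).det‖) ∧
    (∀ m i j, ‖c m i‖ = ‖c m j‖) := by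
  have hnorm : ∀ m i, ‖c m i‖ ^ (D * D) * ‖(ψ i).det‖ ^ D =
      ‖(A m).det‖ * ‖(B m).det‖ * ‖φ.det‖ ^ D := fun m i => by
    simpa only [Fintype.card_fin, norm_mul, norm_pow] using
      congrArg norm (pow_mul_det_eq_of_mul_kronecker_mul_transpose_eq (hψ i) (hmap m i))
  have hdet_pos : ∀ i, 0 < ‖(ψ i).det‖ := fun i =>
    norm_pos_iff.mpr ((isUnit_iff_isUnit_det _).mp (hψ i)).ne_zero
  have key := eq_of_pow_mul_pow_eq_of_sum_sq_eq_one (Nat.mul_ne_zero hD.ne' hD.ne') hD.ne'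
    (fun _ _ => norm_nonneg _) hdet_pos hc fun m i j => (hnorm m i).trans (hnorm m j).symm
  exact ⟨fun i j => (key i j).1, fun m i j => (key i j).2 m⟩

/-- If a separable operation deterministically clones each of the full-Schmidt-rank
states `ψ_i` using the blank state `φ` (in map-state duality form), then all `ψ_i`
have equal `|det|` (equal G-concurrence), and the probabilities `|c_{m,i}|²` are
independent of which state is input. -/
theorem local_cloning_equal_det (D M N : ℕ) (hD : 0 < D) (hM : 0 < M) (hN : 0 < N)
    (A B : Fin M → Matrix (Fin D × Fin D) (Fin D × Fin D) ℂ)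
    (hclosure : ∑ m, ((A m)ᴴ * A m) ⊗ₖ ((B m)ᴴ * B m) = 1)
    (φ : Matrix (Fin D) (Fin D) ℂ) (hφ : IsUnit φ)
    (ψ : Fin N → Matrix (Fin D) (Fin D) ℂ) (hψ : ∀ i, IsUnit (ψ i))
    (c : Fin M → Fin N → ℂ)
    (hc : ∀ i, ∑ m, ‖c m i‖ ^ 2 = 1)
    (hmap : ∀ m i, A m * ((ψ i) ⊗ₖ φ) * (B m)ᵀ = c m i • ((ψ i) ⊗ₖ (ψ i))) :
    (∀ i j, ‖(ψ i).det‖ = ‖(ψ j).det‖) ∧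
    (∀ m i j, ‖c m i‖ = ‖c m j‖) :=
  local_cloning_equal_det_general D M N hD A B φ ψ hψ c hc hmap
end

section
/- Let G be a finite group and λ : G → ℝ a function with λ(g) ≥ 0 for all g ∈ G and ∑_{g∈G} λ(g) = 1, and define q : G → ℝ by q(r) = ∑_{f∈G} λ(f)·λ(f·r). Then q is majorized by λ in the following sense: for every subset A ⊆ G there exists a subset B ⊆ G with |B| = |A| such that ∑_{r∈A} q(r) ≤ ∑_{g∈B} λ(g). -/
/-!
Writing `∑_{r ∈ A} q(r) = ∑_f λ(f) · ∑_{r ∈ A} λ(f r)` exhibits it as a convex combination, with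
weights `λ(f)`, of the sums of `λ` over the left translates `f A`. Some term of a convex
combination dominates it, so `B = f A` works for a suitable `f`.
-/

open Finset
open scoped Pointwise

lemma exists_sum_mul_le_of_sum_eq_one {ι R : Type*} [Fintype ι] [Nonempty ι]
    [Semiring R] [LinearOrder R] [IsOrderedRing R] (w x : ι → R) (hw : ∀ i, 0 ≤ w i)
    (hw₁ : ∑ i, w i = 1) : ∃ j, ∑ i, w i * x i ≤ x j := by
  obtain ⟨j, -, hj⟩ := exists_max_image univ x univ_nonempty
  refine ⟨j, ?_⟩
  calc ∑ i, w i * x i ≤ ∑ i, w i * x j :=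
        sum_le_sum fun i hi => mul_le_mul_of_nonneg_left (hj i hi) (hw i)
    _ = x j := by rw [← sum_mul, hw₁, one_mul]

lemma Finset.sum_smul_finset_eq {G M : Type*} [Group G] [DecidableEq G] [AddCommMonoid M]
    (w : G → M) (f : G) (A : Finset G) : ∑ g ∈ f • A, w g = ∑ r ∈ A, w (f * r) := by
  rw [← image_smul, sum_image fun _ _ _ _ h => smul_left_cancel f h]
  rfl

/-- The probability vector `q(r) = ∑_f λ(f)·λ(f·r)` is majorized by `λ`: the sum of `q`
over any subset `A` of the group is bounded by the sum of `λ` over some subset of the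
same cardinality. -/
theorem convolution_majorized (G : Type*) [Group G] [Fintype G]
    (lam : G → ℝ) (hnn : ∀ g, 0 ≤ lam g) (hsum : ∑ g, lam g = 1) :
    ∀ A : Finset G, ∃ B : Finset G, B.card = A.card ∧
      ∑ r ∈ A, (∑ f, lam f * lam (f * r)) ≤ ∑ g ∈ B, lam g := by
  classical
  intro A
  obtain ⟨f, hf⟩ :=
    exists_sum_mul_le_of_sum_eq_one lam (fun f => ∑ r ∈ A, lam (f * r)) hnn hsum
  refine ⟨f • A, card_smul_finset f A, ?_⟩
  calc ∑ r ∈ A, ∑ f, lam f * lam (f * r) = ∑ f, lam f * ∑ r ∈ A, lam (f * r) := by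
        rw [sum_comm]; simp_rw [mul_sum]
    _ ≤ ∑ r ∈ A, lam (f * r) := hf
    _ = ∑ g ∈ f • A, lam g := (sum_smul_finset_eq lam f A).symm
end

section
/- Let G be a finite group and λ : G → ℝ a function with λ(g) > 0 for all g ∈ G, ∑_{g∈G} λ(g) = 1, and λ not constant (there exist g, h ∈ G with λ(g) ≠ λ(h)); define q : G → ℝ by q(r) = ∑_{f∈G} λ(f)·λ(f·r). Then the Shannon entropies satisfy the strict inequality −∑_{r∈G} q(r)·log q(r) > −∑_{g∈G} λ(g)·log λ(g). -/
/-! For each `r`, `q r = ∑_f λ f · λ (f r)` is a `λ`-weighted average of the values of `λ`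
at the points `f r`; these values are not all equal, so strict concavity of `η x = -x log x` gives
`∑_f λ f · η (λ (f r)) < η (q r)`. Summing over `r`, the left side is the entropy of `λ`, since
every translate `r ↦ λ (f r)` has the same entropy as `λ` and the weights sum to one. -/

open Finset Real

theorem neg_sum_mul_log_eq_sum_negMulLog {ι : Type*} (s : Finset ι) (x : ι → ℝ) :
    -∑ i ∈ s, x i * log (x i) = ∑ i ∈ s, negMulLog (x i) := by
  simp only [negMulLog, neg_mul, sum_neg_distrib]

theorem StrictConcaveOn.sum_map_lt_sum_map_sum_mul_translate {G : Type*} [Group G] [Fintype G]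
    {φ : ℝ → ℝ} (hφ : StrictConcaveOn ℝ (Set.Ici 0) φ) {w p : G → ℝ}
    (hw : ∀ g, 0 < w g) (hw₁ : ∑ g, w g = 1) (hp : ∀ g, 0 ≤ p g)
    (hp_nonconst : ∃ g h : G, p g ≠ p h) :
    ∑ g, φ (p g) < ∑ r, φ (∑ f, w f * p (f * r)) := by
  have jensen : ∀ r : G, ∑ f, w f * φ (p (f * r)) < φ (∑ f, w f * p (f * r)) := by
    intro r
    obtain ⟨g, h, hgh⟩ := hp_nonconst
    have translate_nonconst : p (g * r⁻¹ * r) ≠ p (h * r⁻¹ * r) := by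
      simpa only [inv_mul_cancel_right] using hgh
    simpa only [smul_eq_mul] using hφ.lt_map_sum (fun f _ => hw f) hw₁ (fun f _ => hp _)
      ⟨g * r⁻¹, mem_univ _, h * r⁻¹, mem_univ _, translate_nonconst⟩
  calc ∑ g, φ (p g)
      = ∑ r, ∑ f, w f * φ (p (f * r)) := by
        have translate_sum (f : G) : ∑ r, φ (p (f * r)) = ∑ g, φ (p g) :=
          Equiv.sum_comp (Equiv.mulLeft f) fun g => φ (p g)
        rw [sum_comm]
        simp only [← mul_sum, translate_sum, ← sum_mul, hw₁, one_mul]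
    _ < ∑ r, φ (∑ f, w f * p (f * r)) := sum_lt_sum_of_nonempty univ_nonempty fun r _ => jensen r

/-- Strict entropy gap: if `λ` is a strictly positive, non-constant probability vector
on a finite group `G` and `q(r) = ∑_f λ(f)·λ(f·r)`, then the Shannon entropy of `q`
is strictly larger than that of `λ`. -/
theorem entropy_strict_gap (G : Type*) [Group G] [Fintype G]
    (lam : G → ℝ) (hpos : ∀ g, 0 < lam g) (hsum : ∑ g, lam g = 1)
    (hnc : ∃ g h : G, lam g ≠ lam h) :
    (-∑ g, lam g * Real.log (lam g)) <
      -∑ r, (∑ f, lam f * lam (f * r)) * Real.log (∑ f, lam f * lam (f * r)) := by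
  rw [neg_sum_mul_log_eq_sum_negMulLog, neg_sum_mul_log_eq_sum_negMulLog]
  exact strictConcaveOn_negMulLog.sum_map_lt_sum_map_sum_mul_translate hpos hsum
    (fun g => (hpos g).le) hnc
end

section
/- Let D and n be positive integers, and let C be an additive subgroup of the group (ZMod D)ⁿ of functions Fin n → ZMod D under componentwise addition mod D. Define S := { s : Fin n → ZMod D | for every c ∈ C, ∑_{i} c(i)·s(i) = 0 in ZMod D }. Then: (a) C is maximal relative to S, i.e. { c : Fin n → ZMod D | for every s ∈ S, ∑_{i} c(i)·s(i) = 0 } = C; and (b) the cardinalities satisfy |C| · |S| = Dⁿ. -/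
/-!
Additive characters `A →+ ZMod D` of a finite abelian group `A` whose exponent divides `D` are
characters with values in the `D`-th roots of unity of `Multiplicative (ZMod D)`, so finite abelian
duality applies: they separate `A` from any subgroup `H`, and those vanishing on `H` are as many
as the elements of `A ⧸ H`. The dot product identifies `(ZMod D)ⁿ` with its own character group,
turning `S` into the annihilator of `C`; hence `C` is the annihilator of `S` and
`|S| = |(ZMod D)ⁿ ⧸ C| = Dⁿ / |C|`.
-/

open Matrix

namespace ZMod

variable {D : ℕ} {A : Type*} [AddCommGroup A]

def addMonoidHomEquivMonoidHomUnits :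
    (A →+ ZMod D) ≃ (Multiplicative A →* (Multiplicative (ZMod D))ˣ) :=
  AddMonoidHom.toMultiplicative.trans (MulEquiv.monoidHomCongrRightEquiv toUnits)

lemma addMonoidHomEquivMonoidHomUnits_apply_eq_one_iff (φ : A →+ ZMod D)
    (a : Multiplicative A) :
    addMonoidHomEquivMonoidHomUnits φ a = 1 ↔ φ a.toAdd = 0 := by
  simp [addMonoidHomEquivMonoidHomUnits]

variable {ι : Type*} [Fintype ι] [DecidableEq ι]

def dotProductAddMonoidHomEquiv : (ι → ZMod D) ≃ ((ι → ZMod D) →+ ZMod D) :=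
  (dotProductEquiv (ZMod D) ι).toEquiv.trans (AddMonoidHom.toZModLinearMapEquiv D).symm.toEquiv

@[simp]
lemma dotProductAddMonoidHomEquiv_apply (s c : ι → ZMod D) :
    dotProductAddMonoidHomEquiv s c = c ⬝ᵥ s :=
  dotProduct_comm s c

omit [Fintype ι] [DecidableEq ι] in
lemma addMonoid_exponent_pi_dvd : AddMonoid.exponent (ι → ZMod D) ∣ D :=
  AddMonoid.exponent_dvd_of_forall_nsmul_eq_zero fun g => by ext; simp

variable [NeZero D]

instance : HasEnoughRootsOfUnity (Multiplicative (ZMod D)) D where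
  prim := ⟨_, by
    simpa [orderOf_ofAdd_eq_addOrderOf] using
      IsPrimitiveRoot.orderOf (Multiplicative.ofAdd (1 : ZMod D))⟩
  cyc :=
    have : IsCyclic (Multiplicative (ZMod D))ˣ :=
      isCyclic_of_surjective _ (toUnits (G := Multiplicative (ZMod D))).surjective
    inferInstance

lemma hasEnoughRootsOfUnity_exponent (hA : AddMonoid.exponent A ∣ D) :
    HasEnoughRootsOfUnity (Multiplicative (ZMod D)) (Monoid.exponent (Multiplicative A)) :=
  HasEnoughRootsOfUnity.of_dvd _ (Monoid.exponent_multiplicative (G := A) ▸ hA)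

variable [Finite A]

theorem mem_iff_forall_addMonoidHom_eq_zero (hA : AddMonoid.exponent A ∣ D)
    (H : AddSubgroup A) (x : A) :
    x ∈ H ↔ ∀ φ : A →+ ZMod D, (∀ y ∈ H, φ y = 0) → φ x = 0 := by
  have := hasEnoughRootsOfUnity_exponent hA
  have h := CommGroup.forall_monoidHom_apply_eq_one_iff (Multiplicative (ZMod D))
    H.toSubgroup (.ofAdd x)
  rw [← addMonoidHomEquivMonoidHomUnits.forall_congr_right] at h
  simpa [addMonoidHomEquivMonoidHomUnits_apply_eq_one_iff] using h.symm

theorem card_annihilator_eq_card_quotient (hA : AddMonoid.exponent A ∣ D)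
    (H : AddSubgroup A) :
    Nat.card {φ : A →+ ZMod D // ∀ y ∈ H, φ y = 0} = Nat.card (A ⧸ H) := by
  have := hasEnoughRootsOfUnity_exponent hA
  have e : {φ : A →+ ZMod D // ∀ y ∈ H, φ y = 0} ≃
      (MonoidHom.domRestrictHom H.toSubgroup (Multiplicative (ZMod D))ˣ).ker :=
    addMonoidHomEquivMonoidHomUnits.subtypeEquiv fun φ => by
      simp [addMonoidHomEquivMonoidHomUnits_apply_eq_one_iff]
  rw [Nat.card_congr e, CommGroup.card_domRestrictHom_ker]
  rfl

theorem mem_iff_forall_dotProduct_eq_zero (C : AddSubgroup (ι → ZMod D)) (c : ι → ZMod D) :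
    c ∈ C ↔ ∀ s, (∀ c' ∈ C, c' ⬝ᵥ s = 0) → c ⬝ᵥ s = 0 := by
  rw [mem_iff_forall_addMonoidHom_eq_zero addMonoid_exponent_pi_dvd C c,
    ← dotProductAddMonoidHomEquiv.forall_congr_right]
  simp only [dotProductAddMonoidHomEquiv_apply]

theorem card_mul_card_dotProduct_annihilator (C : AddSubgroup (ι → ZMod D)) :
    Nat.card C * Nat.card {s : ι → ZMod D | ∀ c ∈ C, c ⬝ᵥ s = 0} = D ^ Fintype.card ι := by
  have e : {s : ι → ZMod D | ∀ c ∈ C, c ⬝ᵥ s = 0} ≃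
      {φ : (ι → ZMod D) →+ ZMod D // ∀ c ∈ C, φ c = 0} :=
    dotProductAddMonoidHomEquiv.subtypeEquiv fun s => by
      simp only [Set.mem_ofPred_eq, dotProductAddMonoidHomEquiv_apply]
  rw [Nat.card_congr e, card_annihilator_eq_card_quotient addMonoid_exponent_pi_dvd, mul_comm,
    ← AddSubgroup.card_eq_card_quotient_mul_card_addSubgroup]
  simp

end ZMod

theorem code_stabilizer_duality_general (D n : ℕ) (hD : 0 < D)
    (C : AddSubgroup (Fin n → ZMod D)) :
    ({c : Fin n → ZMod D |
        ∀ s ∈ {s : Fin n → ZMod D | ∀ c' ∈ C, ∑ i, c' i * s i = 0}, ∑ i, c i * s i = 0}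
      = (C : Set (Fin n → ZMod D))) ∧
    Nat.card C * Nat.card {s : Fin n → ZMod D | ∀ c ∈ C, ∑ i, c i * s i = 0} = D ^ n := by
  have : NeZero D := ⟨hD.ne'⟩
  refine ⟨Set.ext fun c => (ZMod.mem_iff_forall_dotProduct_eq_zero C c).symm, ?_⟩
  have h := ZMod.card_mul_card_dotProduct_annihilator C
  rwa [Fintype.card_fin] at h

/-- Duality between an additive graph code and its stabilizer: if `C` is an additive
subgroup of `(ZMod D)ⁿ` and `S` is the set of all `s` with `c·s = 0` for every `c ∈ C`,
then the set of all `c` with `c·s = 0` for every `s ∈ S` equals `C`, and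
`|C| · |S| = Dⁿ`. -/
theorem code_stabilizer_duality (D n : ℕ) (hD : 0 < D) (hn : 0 < n)
    (C : AddSubgroup (Fin n → ZMod D)) :
    ({c : Fin n → ZMod D |
        ∀ s ∈ {s : Fin n → ZMod D | ∀ c' ∈ C, ∑ i, c' i * s i = 0}, ∑ i, c i * s i = 0}
      = (C : Set (Fin n → ZMod D))) ∧
    Nat.card C * Nat.card {s : Fin n → ZMod D | ∀ c ∈ C, ∑ i, c i * s i = 0} = D ^ n :=
  code_stabilizer_duality_general D n hD C
end

section
/- Let D ≥ 1 and n ≥ 1 be integers and Γ : Fin n → Fin n → ℕ an adjacency matrix (so Γ(l,m) = Γ(m,l) for all l, m and Γ(l,l) = 0 for all l). Define the graph-state amplitude g : (Fin n → ZMod D) → ℂ by g(k) = exp((2πi/D)·∑_{l<m} Γ(l,m)·(k l).val·(k m).val). Then for every vertex i ∈ Fin n and every k : Fin n → ZMod D, g(k + δ_i) = exp((2πi/D)·∑_{m} Γ(i,m)·(k m).val) · g(k), where δ_i : Fin n → ZMod D equals 1 at i and 0 elsewhere. (X–Z rule: acting with the shift operator X on qudit i of the graph state |G⟩ produces the same state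 as acting with Z^{Γ(i,m)} on each neighbor m of i.) -/
/-- The (unnormalized) amplitude of the graph state of the multigraph with adjacency
matrix `Γ` at the computational basis state `k`. -/
noncomputable def graphStateAmp (D n : ℕ) (Γ : Fin n → Fin n → ℕ)
    (k : Fin n → ZMod D) : ℂ :=
  Complex.exp ((2 * (Real.pi : ℂ) * Complex.I / (D : ℂ)) *
    ∑ p ∈ Finset.univ.filter (fun p : Fin n × Fin n => p.1 < p.2),
      (Γ p.1 p.2 : ℂ) * ((k p.1).val : ℂ) * ((k p.2).val : ℂ))

/-!
The amplitude is `exp (2πi/D · Q(k))` for the quadratic form `Q(k) = ∑_{l<m} Γ l m · k l · k m`, and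
this exponential only depends on `Q(k)` modulo `D`: it is the standard additive character of
`ZMod D` evaluated at `Q(k)` computed in `ZMod D`. This absorbs the wrap-around of `(k i + 1).val`
at `D - 1`. In `ZMod D`, polarization with `Γ` symmetric and zero on the diagonal gives
`Q(k + δ_i) = Q(k) + ∑_m Γ i m · k m`, and the character turns this sum into the claimed product.
-/

section GraphPhase

variable {ι R : Type*} [Fintype ι] [LinearOrder ι] [CommRing R]

def graphPhase (Γ : ι → ι → R) (x : ι → R) : R :=
  ∑ l, ∑ m, if l < m then Γ l m * x l * x m else 0

variable {Γ : ι → ι → R}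

theorem graphPhase_add (hsymm : ∀ l m, Γ l m = Γ m l) (hdiag : ∀ l, Γ l l = 0) (x y : ι → R) :
    graphPhase Γ (x + y) = graphPhase Γ x + graphPhase Γ y + ∑ l, ∑ m, Γ l m * x l * y m := by
  have hexpand : ∀ l m, (if l < m then Γ l m * (x + y) l * (x + y) m else 0) =
      (if l < m then Γ l m * x l * x m else 0) + (if l < m then Γ l m * y l * y m else 0) +
        ((if l < m then Γ l m * x l * y m else 0) + if l < m then Γ l m * y l * x m else 0) := by
    intro l m
    split_ifs
    · simp only [Pi.add_apply]; ring
    · simp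
  have hswap : (∑ l, ∑ m, if l < m then Γ l m * y l * x m else 0) =
      ∑ l, ∑ m, if m < l then Γ l m * x l * y m else 0 := by
    rw [Finset.sum_comm]
    simp only [hsymm, mul_right_comm]
  have hsplit : ∀ l m, ((if l < m then Γ l m * x l * y m else 0) +
      if m < l then Γ l m * x l * y m else 0) = Γ l m * x l * y m := by
    intro l m
    rcases lt_trichotomy l m with h | rfl | h
    · simp [h, h.not_gt]
    · simp [hdiag]
    · simp [h, h.not_gt]
  simp only [graphPhase, hexpand, Finset.sum_add_distrib, hswap]
  simp only [← Finset.sum_add_distrib, hsplit]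

theorem graphPhase_single (i : ι) (a : R) : graphPhase Γ (Pi.single i a) = 0 := by
  refine Finset.sum_eq_zero fun l _ => Finset.sum_eq_zero fun m _ => ?_
  split_ifs with h
  · rcases eq_or_ne l i with rfl | hl
    · simp [h.ne']
    · simp [hl]
  · rfl

theorem graphPhase_add_single (hsymm : ∀ l m, Γ l m = Γ m l) (hdiag : ∀ l, Γ l l = 0)
    (x : ι → R) (i : ι) :
    graphPhase Γ (x + Pi.single i 1) = graphPhase Γ x + ∑ m, Γ i m * x m := by
  simp [graphPhase_add hsymm hdiag, graphPhase_single, Pi.single_apply, hsymm i]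

end GraphPhase

theorem ZMod.stdAddChar_natCast {N : ℕ} [NeZero N] (j : ℕ) :
    ZMod.stdAddChar (j : ZMod N) = Complex.exp (2 * Real.pi * Complex.I / N * j) := by
  simpa [mul_div_right_comm] using ZMod.stdAddChar_coe (N := N) j

theorem graphStateAmp_eq_stdAddChar {D n : ℕ} [NeZero D] (Γ : Fin n → Fin n → ℕ)
    (k : Fin n → ZMod D) :
    graphStateAmp D n Γ k = ZMod.stdAddChar (graphPhase (fun l m => (Γ l m : ZMod D)) k) := by
  have hnat : graphPhase (fun l m => (Γ l m : ZMod D)) k =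
      ((∑ l, ∑ m, if l < m then Γ l m * (k l).val * (k m).val else 0 : ℕ) : ZMod D) := by
    simp [graphPhase, apply_ite]
  rw [hnat, ZMod.stdAddChar_natCast, graphStateAmp, Finset.sum_filter, Fintype.sum_prod_type]
  push_cast [apply_ite]
  rfl

theorem xz_rule_general (D n : ℕ) (hD : 1 ≤ D)
    (Γ : Fin n → Fin n → ℕ) (hsymm : ∀ l m, Γ l m = Γ m l) (hdiag : ∀ l, Γ l l = 0)
    (i : Fin n) (k : Fin n → ZMod D) :
    graphStateAmp D n Γ (k + fun m => if m = i then 1 else 0) =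
      Complex.exp ((2 * (Real.pi : ℂ) * Complex.I / (D : ℂ)) *
          ∑ m, (Γ i m : ℂ) * ((k m).val : ℂ)) *
        graphStateAmp D n Γ k := by
  have : NeZero D := ⟨by omega⟩
  have hδ : (fun m => if m = i then 1 else 0) = Pi.single (M := fun _ => ZMod D) i 1 :=
    funext fun m => (Pi.single_apply i 1 m).symm
  have hZ : Complex.exp ((2 * (Real.pi : ℂ) * Complex.I / (D : ℂ)) *
      ∑ m, (Γ i m : ℂ) * ((k m).val : ℂ)) = ZMod.stdAddChar (∑ m, (Γ i m : ZMod D) * k m) := by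
    have hnat : ∑ m, (Γ i m : ZMod D) * k m = ((∑ m, Γ i m * (k m).val : ℕ) : ZMod D) := by
      simp
    rw [hnat, ZMod.stdAddChar_natCast]
    push_cast
    rfl
  rw [graphStateAmp_eq_stdAddChar, graphStateAmp_eq_stdAddChar, hδ,
    graphPhase_add_single (fun l m => congrArg Nat.cast (hsymm l m)) (fun l => by simp [hdiag]), hZ,
    AddChar.map_add_eq_mul, mul_comm]

/-- X–Z rule: acting with the shift operator `X` on qudit `i` of the graph state
produces the same state as acting with `Z^{Γ(i,m)}` on each neighbor `m` of `i`. -/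
theorem xz_rule (D n : ℕ) (hD : 1 ≤ D) (hn : 1 ≤ n)
    (Γ : Fin n → Fin n → ℕ) (hsymm : ∀ l m, Γ l m = Γ m l) (hdiag : ∀ l, Γ l l = 0)
    (i : Fin n) (k : Fin n → ZMod D) :
    graphStateAmp D n Γ (k + fun m => if m = i then 1 else 0) =
      Complex.exp ((2 * (Real.pi : ℂ) * Complex.I / (D : ℂ)) *
          ∑ m, (Γ i m : ℂ) * ((k m).val : ℂ)) *
        graphStateAmp D n Γ k :=
  xz_rule_general D n hD Γ hsymm hdiag i k
end

section
/- For every even positive integer D and every natural number k, ∑_{j=0}^{D−1} exp(πi·(j² + 2kj)/D) = √D · exp(πi/4) · exp(−πi·k²/D). -/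
/-!
This is the classical theta-function proof (Landsberg–Schaar). Put `τ = 1/D + i/(D²x)` with
`x > 0`. Because `D` is even, the phase `e^{πin²/D}` depends only on `n mod D`, so splitting
`θ(τ) = ∑ₙ e^{πin²τ}` into residue classes mod `D` and applying Poisson summation (the functional
equation of the Hurwitz kernels) to each class gives `θ(τ) = √x ∑_r e^{πir²/D} cosKernel(r/D, x)`.
On the other hand `τ ↦ τ/(1 - Dτ)` is `S T^D S`, and `T^D` fixes `θ` since `D` is even; it sends
`τ` to `-1/D + ix`, whence `θ(τ) = √(Dx) e^{πi/4} θ(-1/D + ix)`. As `x → ∞` both `cosKernel` and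
`θ(-1/D + ix)` tend to `1`, so `∑_r e^{πir²/D} = √D e^{πi/4}`. The general `k` follows by
completing the square, `j² + 2kj = (j + k)² - k²`, and `D`-periodicity of `j ↦ e^{πij²/D}`.
-/

open Complex Real Filter Topology HurwitzZeta

lemma Function.Periodic.sum_range_add {M : Type*} [AddCancelCommMonoid M] {f : ℕ → M} {N : ℕ}
    (hf : Function.Periodic f N) (k : ℕ) :
    ∑ j ∈ Finset.range N, f (j + k) = ∑ j ∈ Finset.range N, f j := by
  induction k with
  | zero => simp
  | succ k ih =>
    have h := (Finset.sum_range_succ' (fun j => f (j + k)) N).symm.trans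
      (Finset.sum_range_succ (fun j => f (j + k)) N)
    rw [zero_add, add_comm N k, hf k] at h
    simpa only [add_right_comm _ 1 k, ← add_assoc, ih] using add_right_cancel h

lemma HasSum.eq_sum_range_of_hasSum_mul_add {α : Type*} [AddCommMonoid α] [TopologicalSpace α]
    [ContinuousAdd α] [T3Space α] {f : ℤ → α} {a : α} (hf : HasSum f a) {D : ℕ} [NeZero D]
    {g : ℕ → α} (hg : ∀ r < D, HasSum (fun q : ℤ => f (q * D + r)) (g r)) :
    a = ∑ r ∈ Finset.range D, g r := by
  have hprod : HasSum (fun p : Fin D × ℤ => f (p.2 * D + p.1)) a :=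
    ((Equiv.prodComm _ _).trans (Int.divModEquiv D).symm).hasSum_iff.mpr hf
  rw [← Fin.sum_univ_eq_sum_range]
  exact (hprod.prod_fiberwise fun r => hg r r.isLt).unique (hasSum_fintype _)

lemma mul_cpow_of_re_pos {x y : ℂ} (hx : 0 < x.re) (hy : 0 < y.re) (s : ℂ) :
    (x * y) ^ s = x ^ s * y ^ s := by
  have hx0 : x ≠ 0 := fun h => by simp [h] at hx
  have hy0 : y ≠ 0 := fun h => by simp [h] at hy
  have hargx := abs_lt.mp (abs_arg_lt_pi_div_two_iff.mpr (Or.inl hx))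
  have hargy := abs_lt.mp (abs_arg_lt_pi_div_two_iff.mpr (Or.inl hy))
  rw [cpow_def_of_ne_zero (mul_ne_zero hx0 hy0), cpow_def_of_ne_zero hx0, cpow_def_of_ne_zero hy0,
    log_mul hx0 hy0 ⟨by linarith, by linarith⟩, add_mul, Complex.exp_add]

lemma neg_I_mul_ofReal_cpow_half {a : ℝ} (ha : 0 < a) :
    (-I * a) ^ (1 / 2 : ℂ) = √a * cexp (-(π * I / 4)) := by
  have ha0 : (a : ℂ) ≠ 0 := ofReal_ne_zero.mpr ha.ne'
  rw [cpow_def_of_ne_zero (mul_ne_zero (neg_ne_zero.mpr I_ne_zero) ha0), log_mul_ofReal a ha _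
    (neg_ne_zero.mpr I_ne_zero), log_neg_I, add_mul, Complex.exp_add, Real.sqrt_eq_rpow,
    ofReal_cpow ha.le, cpow_def_of_ne_zero ha0, ofReal_log ha.le]
  congr 2
  · push_cast; ring
  · ring

lemma cexp_pi_I_sq_div_add_mul {D : ℕ} (hD : Even D) (n m : ℤ) :
    cexp (π * I * (n + m * D) ^ 2 / D) = cexp (π * I * n ^ 2 / D) := by
  obtain ⟨h, rfl⟩ := hD
  rcases eq_or_ne h 0 with rfl | hh
  · simp
  rw [← mul_one (cexp (π * I * (n : ℂ) ^ 2 / _)), ← exp_int_mul_two_pi_mul_I (n * m + m ^ 2 * h),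
    ← Complex.exp_add]
  congr 1
  push_cast
  field_simp
  ring

lemma im_one_div_add_I_mul_div_sq (D : ℕ) (s : ℝ) :
    (1 / D + I * s / D ^ 2 : ℂ).im = s / D ^ 2 := by
  rw [show (1 / D + I * s / D ^ 2 : ℂ) = (1 / D : ℝ) + (s / D ^ 2 : ℝ) * I by push_cast; ring,
    add_im, ofReal_im, mul_I_im, ofReal_re, zero_add]

lemma hasSum_jacobiTheta {τ : ℂ} (hτ : 0 < τ.im) :
    HasSum (fun n : ℤ => cexp (π * I * n ^ 2 * τ)) (jacobiTheta τ) := by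
  simpa [jacobiTheta_eq_jacobiTheta₂, jacobiTheta₂_term] using hasSum_jacobiTheta₂_term 0 hτ

lemma jacobiTheta_eq_div_cpow (τ : ℂ) :
    jacobiTheta τ = jacobiTheta (-1 / τ) / (-I * τ) ^ (1 / 2 : ℂ) := by
  simp [jacobiTheta_eq_jacobiTheta₂, jacobiTheta₂_functional_equation 0 τ, div_eq_inv_mul]

lemma jacobiTheta_add_natCast_of_even {D : ℕ} (hD : Even D) (τ : ℂ) :
    jacobiTheta (τ + D) = jacobiTheta τ := by
  obtain ⟨h, rfl⟩ := hD
  have hper : Function.Periodic jacobiTheta 2 := fun τ => by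
    rw [add_comm, jacobiTheta_two_add]
  simpa [← two_mul, mul_comm] using hper.nat_mul h τ

lemma jacobiTheta_eq_div_cpow_one_sub_mul {D : ℕ} (hD : Even D) {τ : ℂ} (hτ : 0 < τ.im) :
    jacobiTheta τ = jacobiTheta (τ / (1 - D * τ)) / (1 - D * τ) ^ (1 / 2 : ℂ) := by
  have hτ0 : τ ≠ 0 := fun h => by simp [h] at hτ
  set w := -1 / τ + D
  have hw : 0 < w.im := by
    simpa [w, neg_div, inv_im] using div_pos hτ (normSq_pos.mpr hτ0)
  have hw_inv : -1 / w = τ / (1 - D * τ) := by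
    simp only [w]
    field_simp
    rw [show (1 : ℂ) - τ * D = -(-1 + τ * D) by ring, div_neg]
  have hprod : (-I * τ) * (-I * w) = 1 - D * τ := by
    simp only [w]
    field_simp
    linear_combination (-1 + τ * D) * I_sq
  rw [jacobiTheta_eq_div_cpow τ, ← jacobiTheta_add_natCast_of_even hD, jacobiTheta_eq_div_cpow w,
    hw_inv, div_div, ← mul_cpow_of_re_pos (by simpa using hw) (by simpa using hτ),
    mul_comm (-I * w), hprod]

lemma tendsto_jacobiTheta_comap_im_atTop : Tendsto jacobiTheta (comap im atTop) (𝓝 1) := by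
  have h := isBigO_at_im_infty_jacobiTheta_sub_one.trans_tendsto
    ((Real.tendsto_exp_atBot.comp (tendsto_comap.const_mul_atTop_of_neg (by simp [pi_pos]))))
  simpa using h.add_const 1

lemma tendsto_cosKernel_atTop (a : UnitAddCircle) : Tendsto (cosKernel a) atTop (𝓝 1) := by
  obtain ⟨p, hp, hO⟩ := isBigO_atTop_cosKernel_sub a
  have h := hO.trans_tendsto
    (Real.tendsto_exp_atBot.comp (tendsto_id.const_mul_atTop_of_neg (neg_lt_zero.mpr hp)))
  simpa using h.add_const 1

lemma jacobiTheta_eq_sum_evenKernel {D : ℕ} [NeZero D] (hD : Even D) {s : ℝ} (hs : 0 < s) :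
    jacobiTheta (1 / D + I * s / D ^ 2) =
      ∑ r ∈ Finset.range D, cexp (π * I * r ^ 2 / D) * evenKernel (r / D : ℝ) s := by
  have hD0 : (D : ℂ) ≠ 0 := NeZero.ne _
  have hτ : 0 < (1 / D + I * s / D ^ 2 : ℂ).im := by
    rw [im_one_div_add_I_mul_div_sq]
    exact div_pos hs (pow_pos (Nat.cast_pos.mpr (NeZero.pos D)) 2)
  refine (hasSum_jacobiTheta hτ).eq_sum_range_of_hasSum_mul_add fun r _ => ?_
  refine ((hasSum_ofReal.mpr (hasSum_int_evenKernel (r / D : ℝ) hs)).mul_left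
    (cexp (π * I * r ^ 2 / D))).congr_fun fun q => ?_
  have hper := cexp_pi_I_sq_div_add_mul hD r q
  push_cast at hper
  rw [ofReal_exp, ← hper, ← Complex.exp_add]
  congr 1
  push_cast
  field_simp
  linear_combination ((q : ℂ) * D + r) ^ 2 * s * I_sq

lemma sum_cosKernel_eq_mul_jacobiTheta {D : ℕ} [NeZero D] (hD : Even D) {x : ℝ} (hx : 0 < x) :
    ∑ r ∈ Finset.range D, cexp (π * I * r ^ 2 / D) * cosKernel (r / D : ℝ) x =
      √D * cexp (π * I / 4) * jacobiTheta (-1 / D + I * x) := by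
  have hDpos : (0 : ℝ) < D := Nat.cast_pos.mpr (NeZero.pos D)
  have hD0 : (D : ℂ) ≠ 0 := NeZero.ne _
  have hx0 : (x : ℂ) ≠ 0 := ofReal_ne_zero.mpr hx.ne'
  have h := jacobiTheta_eq_sum_evenKernel hD (inv_pos.mpr hx)
  set τ : ℂ := 1 / D + I * ((x⁻¹ : ℝ) : ℂ) / D ^ 2
  have hτ : 0 < τ.im := by
    rw [im_one_div_add_I_mul_div_sq]
    positivity
  have h_one_sub : 1 - D * τ = -I * ↑(1 / (D * x)) := by
    simp only [τ]; push_cast; field_simp; ring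
  have h_div : τ / (1 - D * τ) = -1 / D + I * x := by
    rw [h_one_sub]
    simp only [τ]; push_cast; field_simp; linear_combination -(D * x : ℂ) * I_sq
  have h_kernel (r : ℕ) : (evenKernel (r / D : ℝ) x⁻¹ : ℂ) = √x * cosKernel (r / D : ℝ) x := by
    rw [evenKernel_functional_equation, Real.inv_rpow hx.le, ← Real.sqrt_eq_rpow, one_div, one_div,
      inv_inv, inv_inv, ofReal_mul]
  have h_sqrt : √(1 / (D * x)) = (√D * √x)⁻¹ := by
    rw [one_div, Real.sqrt_inv, Real.sqrt_mul hDpos.le]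
  rw [jacobiTheta_eq_div_cpow_one_sub_mul hD hτ, h_div, h_one_sub,
    neg_I_mul_ofReal_cpow_half (by positivity), h_sqrt] at h
  simp only [h_kernel, mul_left_comm _ (√x : ℂ), ← Finset.mul_sum] at h
  have hsx0 : (√x : ℂ) ≠ 0 := ofReal_ne_zero.mpr (Real.sqrt_pos.mpr hx).ne'
  apply mul_left_cancel₀ hsx0
  rw [← h, Complex.exp_neg]
  push_cast
  field_simp

lemma sum_cexp_pi_I_sq_div {D : ℕ} [NeZero D] (hD : Even D) :
    ∑ r ∈ Finset.range D, cexp (π * I * r ^ 2 / D) = √D * cexp (π * I / 4) := by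
  have hl : Tendsto (fun x : ℝ => ∑ r ∈ Finset.range D, cexp (π * I * r ^ 2 / D) *
      cosKernel (r / D : ℝ) x) atTop (𝓝 (∑ r ∈ Finset.range D, cexp (π * I * r ^ 2 / D) * 1)) :=
    tendsto_finsetSum _ fun r _ =>
      ((continuous_ofReal.tendsto 1).comp (tendsto_cosKernel_atTop _)).const_mul _
  have hr : Tendsto (fun x : ℝ => √D * cexp (π * I / 4) * jacobiTheta (-1 / D + I * x)) atTop
      (𝓝 (√D * cexp (π * I / 4) * 1)) := by
    refine (tendsto_jacobiTheta_comap_im_atTop.comp (tendsto_comap_iff.mpr ?_)).const_mul _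
    have him : (im ∘ fun x : ℝ => -1 / (D : ℂ) + I * x) = id := by ext; simp
    rw [him]
    exact tendsto_id
  simpa using tendsto_nhds_unique (hl.congr' ((eventually_gt_atTop 0).mono fun x hx =>
    sum_cosKernel_eq_mul_jacobiTheta hD hx)) hr

/-- Evaluation of the generalized quadratic Gauss sum for even `D`:
`∑_{j=0}^{D−1} exp(πi(j² + 2kj)/D) = √D · e^{πi/4} · e^{−πik²/D}`. -/
theorem gauss_sum_even (D : ℕ) (hD : 0 < D) (hEven : Even D) (k : ℕ) :
    ∑ j ∈ Finset.range D,
        Complex.exp ((Real.pi : ℂ) * Complex.I * ((j : ℂ) ^ 2 + 2 * (k : ℂ) * (j : ℂ)) / (D : ℂ)) =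
      (Real.sqrt D : ℂ) * Complex.exp ((Real.pi : ℂ) * Complex.I / 4) *
        Complex.exp (-((Real.pi : ℂ) * Complex.I * (k : ℂ) ^ 2 / (D : ℂ))) := by
  have : NeZero D := ⟨hD.ne'⟩
  have hper : Function.Periodic (fun j : ℕ => cexp (π * I * j ^ 2 / D)) D := fun j => by
    simpa using cexp_pi_I_sq_div_add_mul hEven j 1
  calc ∑ j ∈ Finset.range D, cexp (π * I * (j ^ 2 + 2 * k * j) / D)
      = ∑ j ∈ Finset.range D, cexp (-(π * I * k ^ 2 / D)) * cexp (π * I * ↑(j + k) ^ 2 / D) := by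
        refine Finset.sum_congr rfl fun j _ => ?_
        rw [← Complex.exp_add]
        congr 1
        push_cast
        ring
    _ = cexp (-(π * I * k ^ 2 / D)) * (√D * cexp (π * I / 4)) := by
        rw [← Finset.mul_sum, hper.sum_range_add k, sum_cexp_pi_I_sq_div hEven]
    _ = _ := mul_comm _ _
end

section
/- For every positive integer D and every real number t with 0 < t ≤ 1, the determinant of the D×D matrix M(t) is nonzero. (Consequently every member of the graph-state family of equientangled bases has full Schmidt rank for all 0 < t ≤ 1.) -/
/-! The matrix is the Vandermonde matrix of the nodes `ζ_j = exp(2πi·j·t/D)`, so its determinant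
is nonzero as soon as the nodes are distinct. Two nodes `ζ_j, ζ_k` differ by the phase
`exp(2πi·(j - k)·t/D)`, and `|j - k|·t/D < 1` because `|j - k| < D` and `t ≤ 1`; a phase
`exp(2πi·x)` with `|x| < 1` equals `1` only for `x = 0`. -/

open Complex Matrix Real

lemma Complex.eq_of_exp_two_pi_I_mul_eq {x y : ℝ} (hxy : |x - y| < 1)
    (h : exp (2 * π * I * x) = exp (2 * π * I * y)) : x = y := by
  obtain ⟨n, hn⟩ := exp_eq_exp_iff_exists_int.mp h
  have hreal : x = y + n := by
    have h2πI : (2 * π * I : ℂ) ≠ 0 := by simp [pi_ne_zero]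
    exact_mod_cast mul_left_cancel₀ h2πI (by rw [hn]; ring : (2 * π * I : ℂ) * x = _ * (y + n))
  have hn_abs : |(n : ℝ)| < 1 := by simpa [hreal] using hxy
  have hn0 : n = 0 := Int.abs_lt_one_iff.mp (by exact_mod_cast hn_abs)
  simpa [hn0] using hreal

lemma Fin.abs_val_sub_val_lt {D : ℕ} (j k : Fin D) : |((j : ℕ) : ℝ) - (k : ℕ)| < D := by
  have hj : ((j : ℕ) : ℝ) < D := by exact_mod_cast j.isLt
  have hk : ((k : ℕ) : ℝ) < D := by exact_mod_cast k.isLt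
  rw [abs_sub_lt_iff]
  constructor <;> linarith [Nat.cast_nonneg (α := ℝ) (j : ℕ), Nat.cast_nonneg (α := ℝ) (k : ℕ)]

lemma Matrix.of_exp_mul_mul_eq_vandermonde {n : ℕ} (c : ℂ) :
    Matrix.of (fun j k : Fin n => exp (c * (j : ℕ) * (k : ℕ))) =
      vandermonde fun j : Fin n => exp (c * (j : ℕ)) := by
  ext j k
  rw [of_apply, vandermonde_apply, ← Complex.exp_nat_mul]
  ring_nf

lemma injective_exp_two_pi_I_mul_nat_mul_div {D : ℕ} {t : ℝ} (ht0 : 0 < t) (ht1 : t ≤ 1) :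
    Function.Injective fun j : Fin D => exp (2 * π * I * ((j : ℕ) * t / D : ℝ)) := by
  intro j k hjk
  have hD : (0 : ℝ) < D := by exact_mod_cast j.pos
  have hsmall : |(j : ℕ) * t / D - (k : ℕ) * t / D| < 1 := by
    rw [← sub_div, ← sub_mul, abs_div, abs_mul, abs_of_pos ht0, abs_of_pos hD, div_lt_one hD]
    calc |((j : ℕ) : ℝ) - (k : ℕ)| * t ≤ |((j : ℕ) : ℝ) - (k : ℕ)| :=
          mul_le_of_le_one_right (abs_nonneg _) ht1
      _ < D := Fin.abs_val_sub_val_lt j k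
  have hjk' := eq_of_exp_two_pi_I_mul_eq hsmall hjk
  rw [div_left_inj' hD.ne', mul_left_inj' ht0.ne'] at hjk'
  exact Fin.ext (by exact_mod_cast hjk')

theorem graph_state_full_rank_general (D : ℕ) (t : ℝ) (ht0 : 0 < t) (ht1 : t ≤ 1) :
    (Matrix.of fun j k : Fin D =>
        Complex.exp (2 * (Real.pi : ℂ) * Complex.I * ((j : ℕ) : ℂ) * ((k : ℕ) : ℂ) * (t : ℂ) /
          (D : ℂ))).det ≠ 0 := by
  have hM : (Matrix.of fun j k : Fin D =>
      exp (2 * (π : ℂ) * I * ((j : ℕ) : ℂ) * ((k : ℕ) : ℂ) * (t : ℂ) / (D : ℂ))) =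
      Matrix.of fun j k : Fin D => exp (2 * π * I * t / D * (j : ℕ) * (k : ℕ)) := by
    ext j k
    simp only [of_apply]
    ring_nf
  rw [hM, of_exp_mul_mul_eq_vandermonde, det_vandermonde_ne_zero_iff]
  convert injective_exp_two_pi_I_mul_nat_mul_div (D := D) ht0 ht1 using 3
  push_cast
  ring

/-- The coefficient matrix `M(t)_{j,k} = exp(2πi·j·k·t/D)` of the graph-state family of
equientangled bases has nonzero determinant for all `0 < t ≤ 1`; hence every basis state
has full Schmidt rank. -/
theorem graph_state_full_rank (D : ℕ) (hD : 0 < D) (t : ℝ) (ht0 : 0 < t) (ht1 : t ≤ 1) :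
    (Matrix.of fun j k : Fin D =>
        Complex.exp (2 * (Real.pi : ℂ) * Complex.I * ((j : ℕ) : ℂ) * ((k : ℕ) : ℂ) * (t : ℂ) /
          (D : ℂ))).det ≠ 0 :=
  graph_state_full_rank_general D t ht0 ht1
end

section
/- For every positive integer D and every real number t, |det M(t)|² = ∏_{r=1}^{D−1} (4·sin²(π·r·t/D))^{D−r}. (Equivalently, the G-concurrence of the graph-state equientangled basis states is C_G(t) = (2^{D−1}/D)·∏_{r=1}^{D−1}[sin²(πrt/D)]^{(D−r)/D}.) -/
/-!
`M(t)` is the Vandermonde matrix of the geometric progression `ζ ^ j` with `ζ = exp (2πit/D)`.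
Since `‖ζ‖ = 1`, the factor `ζ ^ j - ζ ^ i` of its determinant has the norm of `ζ ^ (j - i) - 1`,
which depends only on `r = j - i`; exactly `D - r` pairs `i < j` have this difference, and
`‖exp (iθ) - 1‖ ^ 2 = 4 sin² (θ / 2)`.
-/

open Finset

theorem Fin.prod_prod_Ioi_sub {M : Type*} [CommMonoid M] (f : ℕ → M) (n : ℕ) :
    ∏ i : Fin n, ∏ j ∈ Ioi i, f (j - i) = ∏ r ∈ Ico 1 n, f r ^ (n - r) := by
  induction n with
  | zero => simp
  | succ n ih =>
    have hfirst :
        ∏ j ∈ Ioi (0 : Fin (n + 1)), f (j - (0 : Fin (n + 1))) = ∏ r ∈ Ico 1 (n + 1), f r := by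
      have hIoi := Fin.map_valEmbedding_Ioi (0 : Fin (n + 1))
      rw [Fin.val_zero] at hIoi
      rw [show Ico 1 (n + 1) = Ioo 0 (n + 1) from Ico_add_one_left_eq_Ioo 0 _, ← hIoi, prod_map]
      simp
    have hrest :
        ∏ i : Fin n, ∏ j ∈ Ioi i.succ, f (j - i.succ) = ∏ r ∈ Ico 1 n, f r ^ (n - r) := by
      rw [← ih]
      refine prod_congr rfl fun i _ => ?_
      rw [← Fin.map_succEmb_Ioi, prod_map]
      simp
    have hlast : ∏ r ∈ Ico 1 (n + 1), f r ^ (n - r) = ∏ r ∈ Ico 1 n, f r ^ (n - r) := by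
      refine (prod_subset (Ico_subset_Ico_right n.le_succ) fun r hr hr' => ?_).symm
      simp only [mem_Ico] at hr hr'
      rw [show r = n by omega, Nat.sub_self, pow_zero]
    rw [Fin.prod_univ_succ, hfirst, hrest, ← hlast, ← prod_mul_distrib]
    refine prod_congr rfl fun r hr => ?_
    rw [← pow_succ', Nat.sub_add_comm (by simp at hr; omega)]

theorem Complex.sq_norm_exp_I_mul_ofReal_sub_one (x : ℝ) :
    ‖exp (I * x) - 1‖ ^ 2 = 4 * Real.sin (x / 2) ^ 2 := by
  rw [norm_exp_I_mul_ofReal_sub_one, Real.norm_eq_abs, sq_abs, mul_pow]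
  norm_num

theorem Matrix.norm_det_vandermonde_pow {K : Type*} [NormedField K] {ζ : K} (hζ : ‖ζ‖ = 1)
    (n : ℕ) :
    ‖(vandermonde fun i : Fin n => ζ ^ (i : ℕ)).det‖ = ∏ r ∈ Ico 1 n, ‖ζ ^ r - 1‖ ^ (n - r) := by
  rw [det_vandermonde, norm_prod, ← Fin.prod_prod_Ioi_sub (fun r => ‖ζ ^ r - 1‖)]
  refine prod_congr rfl fun i _ => ?_
  rw [norm_prod]
  refine prod_congr rfl fun j hj => ?_
  have hij : (i : ℕ) ≤ j := (mem_Ioi.mp hj).le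
  rw [← Nat.sub_add_cancel hij, pow_add, ← sub_one_mul, norm_mul, norm_pow, hζ, one_pow, mul_one]
  simp

theorem graph_state_det_abs_sq_general (D : ℕ) (t : ℝ) :
    ‖(Matrix.of fun j k : Fin D =>
        Complex.exp (2 * (Real.pi : ℂ) * Complex.I * ((j : ℕ) : ℂ) * ((k : ℕ) : ℂ) * (t : ℂ) /
          (D : ℂ))).det‖ ^ 2 =
      ∏ r ∈ Finset.Ico 1 D, (4 * Real.sin (Real.pi * r * t / D) ^ 2) ^ (D - r) := by
  set ζ := Complex.exp (Complex.I * ((2 * Real.pi * t / D : ℝ) : ℂ))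
  have hζ : ‖ζ‖ = 1 := Complex.norm_exp_I_mul_ofReal _
  have hpow (r : ℕ) : ζ ^ r = Complex.exp (Complex.I * ((2 * Real.pi * r * t / D : ℝ) : ℂ)) := by
    rw [← Complex.exp_nat_mul]
    push_cast
    ring_nf
  have hM : (Matrix.of fun j k : Fin D =>
      Complex.exp (2 * (Real.pi : ℂ) * Complex.I * ((j : ℕ) : ℂ) * ((k : ℕ) : ℂ) * (t : ℂ) /
        (D : ℂ))) = Matrix.vandermonde fun j => ζ ^ (j : ℕ) := by
    ext j k
    rw [Matrix.vandermonde_apply, Matrix.of_apply, ← pow_mul, ← Complex.exp_nat_mul]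
    push_cast
    ring_nf
  rw [hM, Matrix.norm_det_vandermonde_pow hζ, ← prod_pow]
  refine prod_congr rfl fun r _ => ?_
  rw [← pow_mul, mul_comm, pow_mul, hpow, Complex.sq_norm_exp_I_mul_ofReal_sub_one]
  ring_nf

/-- The squared absolute value of the Vandermonde-type determinant of
`M(t)_{j,k} = exp(2πi·j·k·t/D)` equals `∏_{r=1}^{D−1} (4·sin²(πrt/D))^{D−r}`;
equivalently, the G-concurrence of the graph-state equientangled basis states is
`C_G(t) = (2^{D−1}/D)·∏_{r=1}^{D−1}[sin²(πrt/D)]^{(D−r)/D}`. -/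
theorem graph_state_det_abs_sq (D : ℕ) (hD : 0 < D) (t : ℝ) :
    ‖(Matrix.of fun j k : Fin D =>
        Complex.exp (2 * (Real.pi : ℂ) * Complex.I * ((j : ℕ) : ℂ) * ((k : ℕ) : ℂ) * (t : ℂ) /
          (D : ℂ))).det‖ ^ 2 =
      ∏ r ∈ Finset.Ico 1 D, (4 * Real.sin (Real.pi * r * t / D) ^ 2) ^ (D - r) :=
  graph_state_det_abs_sq_general D t
end

section
/- For every integer D ≥ 2, the function f(t) = ∏_{r=1}^{D−1} sin(π·r·t/D)^{2(D−r)} is strictly increasing on the open interval (0, 1). (Hence the G-concurrence C_G(t) = (2^{D−1}/D)·∏_{r=1}^{D−1}[sin²(πrt/D)]^{(D−r)/D} of the graph-state equientangled basis states is strictly increasing in t on (0, 1).) -/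
/-!
Pairing the factor of index `r` with that of index `D - r` and writing `u = π t / D`,
`f(t) = ∏ r, sin (r u) ^ (D - r) * sin ((D - r) u) ^ r`. Each factor `sin (m u) ^ n * sin (n u) ^ m`
has derivative `m n sin (m u) ^ (n - 1) sin (n u) ^ (m - 1) sin ((m + n) u)`, which is positive
for `0 < u < π / (m + n)`; so every factor is positive and strictly increasing.
-/

open Real Finset Set

theorem sin_natCast_mul_pos {k N : ℕ} (hk : k ≠ 0) (hkN : k ≤ N) {u : ℝ}
    (hu : u ∈ Ioo 0 (π / N)) : 0 < sin (k * u) := by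
  obtain ⟨hu0, huN⟩ := hu
  have hN : (0 : ℝ) < N := by exact_mod_cast (Nat.pos_of_ne_zero hk).trans_le hkN
  rw [lt_div_iff₀ hN] at huN
  apply sin_pos_of_pos_of_lt_pi (by positivity)
  calc (k : ℝ) * u ≤ N * u := by gcongr
    _ < π := by linarith

theorem hasDerivAt_sin_pow_mul_sin_pow {m n : ℕ} (hm : m ≠ 0) (hn : n ≠ 0) (u : ℝ) :
    HasDerivAt (fun u => sin (m * u) ^ n * sin (n * u) ^ m)
      (m * n * sin (m * u) ^ (n - 1) * sin (n * u) ^ (m - 1) * sin ((m + n) * u)) u := by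
  have hsin (k : ℕ) : HasDerivAt (fun u => sin (k * u)) (cos (k * u) * k) u :=
    (hasDerivAt_sin _).comp u ((hasDerivAt_id u).const_mul (k : ℝ) |>.congr_deriv (mul_one _))
  refine (((hsin m).fun_pow n).fun_mul ((hsin n).fun_pow m)).congr_deriv ?_
  obtain ⟨m, rfl⟩ := Nat.exists_eq_add_one_of_ne_zero hm
  obtain ⟨n, rfl⟩ := Nat.exists_eq_add_one_of_ne_zero hn
  rw [add_mul, sin_add]
  simp only [Nat.add_sub_cancel, pow_succ]
  ring

theorem strictMonoOn_sin_pow_mul_sin_pow {m n : ℕ} (hm : m ≠ 0) (hn : n ≠ 0) :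
    StrictMonoOn (fun u => sin (m * u) ^ n * sin (n * u) ^ m) (Ioo 0 (π / (m + n : ℕ))) := by
  refine strictMonoOn_of_hasDerivWithinAt_pos (convex_Ioo _ _) (by fun_prop)
    (fun u _ => (hasDerivAt_sin_pow_mul_sin_pow hm hn u).hasDerivWithinAt) fun u hu => ?_
  rw [interior_Ioo] at hu
  have := sin_natCast_mul_pos hm le_self_add hu
  have := sin_natCast_mul_pos hn le_add_self hu
  have := sin_natCast_mul_pos (by omega) le_rfl hu
  push_cast at this
  positivity

theorem Finset.prod_Ico_pow_two_mul_sub {M : Type*} [CommMonoid M] (a : ℕ → M) (D : ℕ) :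
    ∏ r ∈ Ico 1 D, a r ^ (2 * (D - r)) = ∏ r ∈ Ico 1 D, a r ^ (D - r) * a (D - r) ^ r := by
  have hreflect : ∏ r ∈ Ico 1 D, a (D - r) ^ r = ∏ r ∈ Ico 1 D, a r ^ (D - r) :=
    calc ∏ r ∈ Ico 1 D, a (D - r) ^ r = ∏ r ∈ Ico 1 D, a (D - r) ^ (D - (D - r)) :=
          prod_congr rfl fun r hr => by rw [Nat.sub_sub_self (mem_Ico.mp hr).2.le]
      _ = ∏ r ∈ Ico 1 D, a r ^ (D - r) := by
          rw [prod_Ico_reflect (fun r => a r ^ (D - r)) 1 (Nat.le_succ D)]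
          simp
  rw [prod_mul_distrib, hreflect, ← prod_mul_distrib]
  simp only [two_mul, pow_add]

/-- The function `f(t) = ∏_{r=1}^{D−1} sin(πrt/D)^{2(D−r)}` is strictly increasing on
`(0, 1)`; hence the G-concurrence of the graph-state equientangled basis states is
strictly increasing in `t` on `(0, 1)`. -/
theorem sin_prod_strictMonoOn (D : ℕ) (hD : 2 ≤ D) :
    StrictMonoOn
      (fun t : ℝ => ∏ r ∈ Finset.Ico 1 D, Real.sin (Real.pi * r * t / D) ^ (2 * (D - r)))
      (Set.Ioo (0 : ℝ) 1) := by
  have hD0 : (0 : ℝ) < D := by positivity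
  have hpair (t : ℝ) : ∏ r ∈ Ico 1 D, sin (π * r * t / D) ^ (2 * (D - r)) =
      ∏ r ∈ Ico 1 D, sin (r * (π * t / D)) ^ (D - r) * sin ((D - r : ℕ) * (π * t / D)) ^ r := by
    refine (prod_congr rfl fun r _ => ?_).trans
      (prod_Ico_pow_two_mul_sub (fun r : ℕ => sin (r * (π * t / D))) D)
    congr 2; ring
  have hscale : MapsTo (fun t => π * t / D) (Ioo 0 1) (Ioo 0 (π / D)) := fun t ⟨ht0, ht1⟩ =>
    ⟨by positivity, div_lt_div_of_pos_right (by nlinarith [pi_pos]) hD0⟩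
  intro t₁ ht₁ t₂ ht₂ hlt
  simp only [hpair]
  refine prod_lt_prod_of_nonempty (fun r hr => ?_) (fun r hr => ?_) ⟨1, mem_Ico.mpr ⟨le_rfl, hD⟩⟩
  all_goals
    obtain ⟨hr1, hrD⟩ := mem_Ico.mp hr
    have hr0 : r ≠ 0 := by omega
    have hDr0 : D - r ≠ 0 := by omega
  · have := sin_natCast_mul_pos hr0 hrD.le (hscale ht₁)
    have := sin_natCast_mul_pos hDr0 (Nat.sub_le D r) (hscale ht₁)
    positivity
  · have hmono := strictMonoOn_sin_pow_mul_sin_pow hr0 hDr0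
    rw [Nat.add_sub_cancel' hrD.le] at hmono
    exact hmono (hscale ht₁) (hscale ht₂) (by dsimp only; gcongr)
end
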